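/- arXiv:math/0204117 — 7 statements merged into one kernel-verified Lean document; each statement's English description precedes it below -/
import Mathlib

section
/- Let μ be a σ-finite measure on X and let E be a complex Hilbert space. Suppose S : L²(X, μ; E) → L²(X, μ; E) is a norm-preserving, additive, conjugate-homogeneous (S(αf) = conj(α)·Sf) involution (S² = id) such that for every k ≥ 1 and every f ∈ L²(X, μ; E), S(χ_{X_k}·f) = χ_{X − X_k}·(Sf), where X_k = {x ∈ X : x_k = 1} and χ denotes indicator functions acting by pointwise multiplication. Then for every measurable set A ⊆ X and every f ∈ L²(X, μ; E), S(χ_A·f) = χ_{1−A}·(Sf), where 1−A = {1−x : x ∈ A}. -/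
/-!
Common setup: `GWX` is the compact abelian group `X = ∏_{k ≥ 1} {0,1}` of 0-1 sequences
(with componentwise addition mod 2 and the product σ-algebra, which is generated by the
sets `X_k = {x : x_k = 1}`).  The coordinate `i : ℕ` of `x : GWX` represents the paper's
coordinate `x_{i+1}`, so the Lean index `k : ℕ` corresponds to the paper's index `k + 1`
throughout; in particular the paper's sign `(-1)^k` becomes `(-1)^(k+1)` here.
-/

open MeasureTheory Complex Filter
open scoped ENNReal

noncomputable section

abbrev GWX : Type := ℕ → ZMod 2

/-- `δ_k`: the sequence with `1` in the `k`-th place (the paper's `(k+1)`-th place)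
and `0` elsewhere. -/
def gwDelta (k : ℕ) : GWX := fun i => if i = k then 1 else 0

/-- The componentwise complement `x ↦ 1 - x`. -/
def gwFlip (x : GWX) : GWX := fun i => 1 - x i

/-- The sign `(-1)^{x_1 + ⋯ + x_{k-1} + 1}` of the paper, for the paper's index `k + 1`. -/
def gwSign (k : ℕ) (x : GWX) : ℂ := (-1 : ℂ) ^ ((∑ i ∈ Finset.range k, (x i).val) + 1)

/-!
The measurable sets `A` with `S ∘ χ_A = χ_{τ⁻¹ A} ∘ S`, for a measurable map `τ`, form a
σ-algebra: complements follow from additivity since `χ_{Aᶜ} = 1 - χ_A`, intersections by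
composing, and increasing unions because `S` is an isometry, hence continuous, while
`χ_{A_n} f → χ_A f` in `Lᵖ` for `p < ∞`. For `τ = gwFlip` we have `1 - A = τ⁻¹ A` and
`τ⁻¹ X_k = X ∖ X_k`, and the sets `X_k` generate the product σ-algebra.
-/

open Set Topology

namespace MeasureTheory

variable {α E : Type*} {m : MeasurableSpace α} {μ : Measure α} [NormedAddCommGroup E]
  {p : ℝ≥0∞}

theorem MemLp.tendsto_eLpNorm_indicator_of_antitone {f : α → E} (hf : MemLp f p μ)
    (hp : p ≠ ∞) {D : ℕ → Set α} (hD : ∀ n, MeasurableSet (D n)) (hanti : Antitone D)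
    (hempty : ⋂ n, D n = ∅) :
    Tendsto (fun n => eLpNorm ((D n).indicator f) p μ) atTop (𝓝 0) := by
  rcases eq_or_ne p 0 with rfl | hp0
  · simp
  -- `‖χ_D f‖ₚ ^ p = ν D` for the finite measure `ν = ‖f‖ᵖ μ`, which is continuous from above.
  set ν := μ.withDensity fun x => ‖f x‖ₑ ^ p.toReal
  have hν : Tendsto (ν ∘ D) atTop (𝓝 0) := by
    have hfin : ν (D 0) ≠ ∞ := by
      rw [withDensity_apply _ (hD 0)]
      exact ne_top_of_le_ne_top (lintegral_rpow_enorm_lt_top_of_eLpNorm_lt_top hp0 hp hf.2).ne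
        (setLIntegral_le_lintegral _ _)
    simpa [hempty] using
      tendsto_measure_iInter_atTop (fun n => (hD n).nullMeasurableSet) hanti ⟨0, hfin⟩
  have hnorm : ∀ n, eLpNorm ((D n).indicator f) p μ = ν (D n) ^ (1 / p.toReal) := fun n => by
    rw [eLpNorm_indicator_eq_eLpNorm_restrict (hD n),
      eLpNorm_eq_lintegral_rpow_enorm_toReal hp0 hp, withDensity_apply _ (hD n)]
  have hpos : 0 < 1 / p.toReal := one_div_pos.2 (ENNReal.toReal_pos hp0 hp)
  have hrpow := (ENNReal.continuous_rpow_const (y := 1 / p.toReal)).tendsto 0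
  rw [ENNReal.zero_rpow_of_pos hpos] at hrpow
  simp only [hnorm]
  exact hrpow.comp hν

namespace Lp

theorem exists_coeFn_eq_indicator {s : Set α} (hs : MeasurableSet s) (f : Lp E p μ) :
    ∃ h : Lp E p μ, h =ᵐ[μ] s.indicator f :=
  ⟨((Lp.memLp f).indicator hs).toLp _, MemLp.coeFn_toLp _⟩

theorem tendsto_of_coeFn_eq_indicator_monotone [Fact (1 ≤ p)] (hp : p ≠ ∞)
    {C : ℕ → Set α} (hC : ∀ n, MeasurableSet (C n)) (hmono : Monotone C)
    {f g : Lp E p μ} {h : ℕ → Lp E p μ} (hg : g =ᵐ[μ] (⋃ n, C n).indicator f)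
    (hh : ∀ n, h n =ᵐ[μ] (C n).indicator f) : Tendsto h atTop (𝓝 g) := by
  rw [tendsto_Lp_iff_tendsto_eLpNorm']
  have hdiff : ∀ n, eLpNorm (⇑(h n) - ⇑g) p μ = eLpNorm (((⋃ n, C n) \ C n).indicator f) p μ :=
    fun n => by
      rw [eLpNorm_congr_ae ((hh n).sub hg), eLpNorm_indicator_sub_indicator,
        symmDiff_of_le (subset_iUnion C n)]
  simp only [hdiff]
  refine (Lp.memLp f).tendsto_eLpNorm_indicator_of_antitone hp
    (fun n => (MeasurableSet.iUnion hC).diff (hC n))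
    (fun _ _ hnk => sdiff_subset_sdiff_right (hmono hnk)) ?_
  rw [← sdiff_iUnion, sdiff_self]

end Lp

def IntertwinesIndicator (S : Lp E p μ →+ Lp E p μ) (τ : α → α) (A : Set α) : Prop :=
  ∀ f g : Lp E p μ, g =ᵐ[μ] A.indicator f → S g =ᵐ[μ] (τ ⁻¹' A).indicator (S f)

namespace IntertwinesIndicator

variable {S : Lp E p μ →+ Lp E p μ} {τ : α → α} {A B : Set α}

theorem empty : IntertwinesIndicator S τ ∅ := by
  intro f g hg
  rw [indicator_empty'] at hg
  rw [preimage_empty, indicator_empty', Lp.ext (hg.trans (Lp.coeFn_zero E p μ).symm), map_zero]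
  exact Lp.coeFn_zero E p μ

theorem compl (hAm : MeasurableSet A) (hA : IntertwinesIndicator S τ A) :
    IntertwinesIndicator S τ Aᶜ := by
  intro f g hg
  obtain ⟨k, hk⟩ := Lp.exists_coeFn_eq_indicator hAm f
  have hgk : g = f - k := Lp.ext <| hg.trans <| by
    filter_upwards [hk, Lp.coeFn_sub f k] with x hkx hx
    rw [hx, Pi.sub_apply, hkx, indicator_compl, Pi.sub_apply]
  filter_upwards [hA f k hk, Lp.coeFn_sub (S f) (S k)] with x hkx hx
  rw [hgk, map_sub, hx, Pi.sub_apply, hkx, preimage_compl, indicator_compl, Pi.sub_apply]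

theorem inter (hBm : MeasurableSet B) (hA : IntertwinesIndicator S τ A)
    (hB : IntertwinesIndicator S τ B) : IntertwinesIndicator S τ (A ∩ B) := by
  intro f g hg
  obtain ⟨k, hk⟩ := Lp.exists_coeFn_eq_indicator hBm f
  have hgk : g =ᵐ[μ] A.indicator k := hg.trans <| by
    rw [← indicator_indicator]
    filter_upwards [hk] with x hx
    classical
    simp only [indicator_apply, hx]
  rw [preimage_inter, ← indicator_indicator]
  filter_upwards [hA k g hgk, hB f k hk] with x hgx hkx
  classical
  simp only [hgx, indicator_apply, hkx]

theorem union (hAm : MeasurableSet A) (hBm : MeasurableSet B) (hA : IntertwinesIndicator S τ A)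
    (hB : IntertwinesIndicator S τ B) : IntertwinesIndicator S τ (A ∪ B) := by
  rw [← compl_compl (A ∪ B), compl_union]
  exact ((hA.compl hAm).inter hBm.compl (hB.compl hBm)).compl (hAm.compl.inter hBm.compl)

variable [Fact (1 ≤ p)]

theorem iUnion_of_monotone (hp : p ≠ ∞) (hS : Continuous S) (hτ : Measurable τ)
    {C : ℕ → Set α} (hC : ∀ n, MeasurableSet (C n)) (hmono : Monotone C)
    (h : ∀ n, IntertwinesIndicator S τ (C n)) : IntertwinesIndicator S τ (⋃ n, C n) := by
  intro f g hg
  choose k hk using fun n => Lp.exists_coeFn_eq_indicator (hC n) f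
  obtain ⟨l, hl⟩ := Lp.exists_coeFn_eq_indicator (hτ (MeasurableSet.iUnion hC)) (S f)
  have hk_lim : Tendsto k atTop (𝓝 g) :=
    Lp.tendsto_of_coeFn_eq_indicator_monotone hp hC hmono hg hk
  have hSk_lim : Tendsto (fun n => S (k n)) atTop (𝓝 l) := by
    refine Lp.tendsto_of_coeFn_eq_indicator_monotone hp (fun n => hτ (hC n))
      (fun _ _ hnk => preimage_mono (hmono hnk)) ?_ fun n => h n f (k n) (hk n)
    rwa [← preimage_iUnion]
  rwa [tendsto_nhds_unique ((hS.tendsto g).comp hk_lim) hSk_lim]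

theorem iUnion (hp : p ≠ ∞) (hS : Continuous S) (hτ : Measurable τ)
    {C : ℕ → Set α} (hC : ∀ n, MeasurableSet (C n)) (h : ∀ n, IntertwinesIndicator S τ (C n)) :
    IntertwinesIndicator S τ (⋃ n, C n) := by
  have hC_acc : ∀ n, MeasurableSet (accumulate C n) := fun n =>
    MeasurableSet.biUnion (to_countable _) fun i _ => hC i
  rw [← iUnion_accumulate]
  refine iUnion_of_monotone hp hS hτ hC_acc monotone_accumulate fun n => ?_
  induction n with
  | zero => rw [accumulate_zero_nat]; exact h 0
  | succ n ih => rw [accumulate_succ]; exact ih.union (hC_acc n) (hC (n + 1)) (h (n + 1))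

end IntertwinesIndicator

theorem intertwinesIndicator_of_eq_generateFrom [Fact (1 ≤ p)] {S : Lp E p μ →+ Lp E p μ}
    {τ : α → α} {C : Set (Set α)} (hgen : m = .generateFrom C) (hp : p ≠ ∞) (hS : Continuous S)
    (hτ : Measurable τ) (hC : ∀ s ∈ C, IntertwinesIndicator S τ s) {A : Set α}
    (hA : MeasurableSet A) : IntertwinesIndicator S τ A := by
  have hA' := hgen.le A hA
  clear hA
  induction A, hA' using MeasurableSpace.generateFrom_induction with
  | hC s hs => exact hC s hs
  | empty => exact .empty
  | compl s hs ih => exact ih.compl (hgen.ge s hs)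
  | iUnion s hs ih => exact .iUnion hp hS hτ (fun n => hgen.ge _ (hs n)) ih

end MeasureTheory

theorem gwFlip_involutive : Function.Involutive gwFlip := fun x => by
  funext i; simp [gwFlip]

theorem measurable_gwFlip : Measurable gwFlip :=
  measurable_pi_lambda _ fun i => measurable_from_top.comp (measurable_pi_apply i)

theorem preimage_gwFlip_coord_eq_one (k : ℕ) :
    gwFlip ⁻¹' {x : GWX | x k = 1} = {x : GWX | x k = 1}ᶜ := by
  ext x
  have : ∀ a : ZMod 2, 1 - a = 1 ↔ a ≠ 1 := by decide
  exact this (x k)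

theorem GWX.measurableSpace_eq_generateFrom :
    (inferInstance : MeasurableSpace GWX) =
      .generateFrom (range fun k => {x : GWX | x k = 1}) := by
  refine le_antisymm (iSup_le fun k => Measurable.comap_le ?_) ?_
  · refine @measurable_to_countable' _ _ _ _ (_) _ fun a => ?_
    have hbasic : MeasurableSet[.generateFrom (range fun k => {x : GWX | x k = 1})]
        {x : GWX | x k = 1} :=
      .basic _ ⟨k, rfl⟩
    fin_cases a
    · have : ∀ a : ZMod 2, a = 0 ↔ a ≠ 1 := by decide
      convert hbasic.compl using 1
      ext x; exact this (x k)
    · exact hbasic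
  · refine MeasurableSpace.generateFrom_le ?_
    rintro _ ⟨k, rfl⟩
    exact measurable_pi_apply k (measurableSet_singleton 1)

theorem conj_involution_indicator_flip_general
    {E : Type*} [NormedAddCommGroup E]
    (μ : Measure GWX)
    (S : Lp E 2 μ → Lp E 2 μ)
    (hnorm : ∀ f, ‖S f‖ = ‖f‖)
    (hadd : ∀ f g, S (f + g) = S f + S g)
    (hXk : ∀ (k : ℕ) (f g : Lp E 2 μ),
      (↑g : GWX → E) =ᵐ[μ] ({x : GWX | x k = 1}).indicator ↑f →
      (↑(S g) : GWX → E) =ᵐ[μ] ({x : GWX | x k = 1})ᶜ.indicator ↑(S f)) :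
    ∀ (A : Set GWX), MeasurableSet A → ∀ (f g : Lp E 2 μ),
      (↑g : GWX → E) =ᵐ[μ] A.indicator ↑f →
      (↑(S g) : GWX → E) =ᵐ[μ] (gwFlip '' A).indicator ↑(S f) := by
  intro A hA
  have hS : Isometry (AddMonoidHom.mk' S hadd) := AddMonoidHomClass.isometry_of_norm _ hnorm
  rw [gwFlip_involutive.image_eq_preimage_symm]
  refine intertwinesIndicator_of_eq_generateFrom GWX.measurableSpace_eq_generateFrom
    ENNReal.ofNat_ne_top hS.continuous measurable_gwFlip ?_ hA
  rintro _ ⟨k, rfl⟩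
  rw [IntertwinesIndicator, preimage_gwFlip_coord_eq_one]
  exact hXk k

/-- if a norm-preserving, additive, conjugate-homogeneous involution `S` of
`L²(X, μ; E)` intertwines multiplication by `χ_{X_k}` with multiplication by `χ_{X ∖ X_k}`
for every `k`, then it intertwines multiplication by `χ_A` with multiplication by `χ_{1-A}`
for every measurable `A ⊆ X`. -/
theorem conj_involution_indicator_flip
    {E : Type*} [NormedAddCommGroup E] [InnerProductSpace ℂ E] [CompleteSpace E]
    (μ : Measure GWX) [SigmaFinite μ]
    (S : Lp E 2 μ → Lp E 2 μ)
    (hnorm : ∀ f, ‖S f‖ = ‖f‖)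
    (hadd : ∀ f g, S (f + g) = S f + S g)
    (hconj : ∀ (α : ℂ) (f : Lp E 2 μ), S (α • f) = (starRingEnd ℂ) α • S f)
    (hinv : ∀ f, S (S f) = f)
    (hXk : ∀ (k : ℕ) (f g : Lp E 2 μ),
      (↑g : GWX → E) =ᵐ[μ] ({x : GWX | x k = 1}).indicator ↑f →
      (↑(S g) : GWX → E) =ᵐ[μ] ({x : GWX | x k = 1})ᶜ.indicator ↑(S f)) :
    ∀ (A : Set GWX), MeasurableSet A → ∀ (f g : Lp E 2 μ),
      (↑g : GWX → E) =ᵐ[μ] A.indicator ↑f →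
      (↑(S g) : GWX → E) =ᵐ[μ] (gwFlip '' A).indicator ↑(S f) :=
  conj_involution_indicator_flip_general μ S hnorm hadd hXk
end
end

section
/- Let μ be a σ-finite measure on X and let E be a nontrivial complex Hilbert space. Suppose S : L²(X, μ; E) → L²(X, μ; E) is a norm-preserving, additive, conjugate-homogeneous involution such that for every measurable set A ⊆ X and every f, S(χ_A·f) = χ_{1−A}·(Sf). Then μ and μ̃ are mutually absolutely continuous, where μ̃ denotes the pushforward of μ under the measurable involution x ↦ 1−x (so μ̃(A) = μ(1−A) for measurable A). -/
/-!
Common setup: `GWX` is the compact abelian group `X = ∏_{k ≥ 1} {0,1}` of 0-1 sequences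
(with componentwise addition mod 2 and the product σ-algebra, which is generated by the
sets `X_k = {x : x_k = 1}`).  The coordinate `i : ℕ` of `x : GWX` represents the paper's
coordinate `x_{i+1}`, so the Lean index `k : ℕ` corresponds to the paper's index `k + 1`
throughout; in particular the paper's sign `(-1)^k` becomes `(-1)^(k+1)` here.
-/

open MeasureTheory Complex Filter
open scoped ENNReal

noncomputable section

/-- if `L²(X, μ; E)` (with `E` a nontrivial complex Hilbert space) carries a
norm-preserving, additive, conjugate-homogeneous involution `S` intertwining multiplication
by `χ_A` with multiplication by `χ_{1-A}` for every measurable `A`, then `μ` and its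
pushforward `μ̃` under `x ↦ 1 - x` are mutually absolutely continuous. -/
theorem conj_involution_measure_equiv
    {E : Type*} [NormedAddCommGroup E] [InnerProductSpace ℂ E] [CompleteSpace E] [Nontrivial E]
    (μ : Measure GWX) [SigmaFinite μ]
    (S : Lp E 2 μ → Lp E 2 μ)
    (hnorm : ∀ f, ‖S f‖ = ‖f‖)
    (hadd : ∀ f g, S (f + g) = S f + S g)
    (hconj : ∀ (α : ℂ) (f : Lp E 2 μ), S (α • f) = (starRingEnd ℂ) α • S f)
    (hinv : ∀ f, S (S f) = f)
    (hA : ∀ (A : Set GWX), MeasurableSet A → ∀ (f g : Lp E 2 μ),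
      (↑g : GWX → E) =ᵐ[μ] A.indicator ↑f →
      (↑(S g) : GWX → E) =ᵐ[μ] (gwFlip '' A).indicator ↑(S f)) :
    μ.map gwFlip ≪ μ ∧ μ ≪ μ.map gwFlip := by

  obtain ⟨e, he⟩ := exists_ne (0 : E)
  have hinvol : Function.Involutive gwFlip := by
    intro x; funext i; simp [gwFlip]
  have hm : Measurable gwFlip := by
    apply measurable_pi_lambda
    intro i
    exact (measurable_pi_apply i).const_sub 1
  have himg : ∀ A : Set GWX, gwFlip '' A = gwFlip ⁻¹' A := fun A =>
    congrFun (Set.image_eq_preimage_of_inverse hinvol hinvol) A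
  have hS0 : S 0 = 0 := by
    have h := hadd 0 0
    rw [add_zero] at h
    exact (left_eq_add.mp h)
  -- Key step: null sets are mapped to null sets under flip.
  have key : ∀ A : Set GWX, MeasurableSet A → μ A = 0 → μ (gwFlip ⁻¹' A) = 0 := by
    intro A hAm hA0
    have main : ∀ h : Lp E 2 μ, (gwFlip ⁻¹' A).indicator (↑h : GWX → E) =ᵐ[μ] 0 := by
      intro h
      have hnA : ∀ᵐ x ∂μ, x ∉ A := by
        rw [← measure_eq_zero_iff_ae_notMem]; exact hA0
      have h1 : ((0 : Lp E 2 μ) : GWX → E) =ᵐ[μ] A.indicator ↑(S h) := by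
        filter_upwards [hnA, Lp.coeFn_zero E 2 μ] with x hx h0
        rw [h0, Set.indicator_of_notMem hx]; rfl
      have h2 := hA A hAm (S h) 0 h1
      rw [hS0, hinv, himg] at h2
      exact ((Lp.coeFn_zero E 2 μ).symm.trans h2).symm
    have step : ∀ n : ℕ, μ (gwFlip ⁻¹' A ∩ spanningSets μ n) = 0 := by
      intro n
      set D := spanningSets μ n with hD
      have hDm : MeasurableSet D := measurableSet_spanningSets μ n
      have hDf : μ D ≠ ∞ := (measure_spanningSets_lt_top μ n).ne
      set h : Lp E 2 μ := indicatorConstLp 2 hDm hDf e with hh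
      have hcoe : (↑h : GWX → E) =ᵐ[μ] D.indicator (fun _ => e) :=
        indicatorConstLp_coeFn
      have hae : ∀ᵐ x ∂μ, x ∉ gwFlip ⁻¹' A ∩ D := by
        filter_upwards [main h, hcoe] with x h1 h2
        rintro ⟨hxA, hxD⟩
        apply he
        have h1' : (gwFlip ⁻¹' A).indicator (↑h : GWX → E) x = 0 := h1
        rw [Set.indicator_of_mem hxA, h2, Set.indicator_of_mem hxD] at h1'
        exact h1'
      rwa [← measure_eq_zero_iff_ae_notMem] at hae
    have hcover : gwFlip ⁻¹' A = ⋃ n, gwFlip ⁻¹' A ∩ spanningSets μ n := by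
      rw [← Set.inter_iUnion, iUnion_spanningSets, Set.inter_univ]
    rw [hcover]
    exact measure_iUnion_null step
  constructor
  · refine Measure.AbsolutelyContinuous.mk fun A hAm hA0 => ?_
    rw [Measure.map_apply hm hAm]
    exact key A hAm hA0
  · refine Measure.AbsolutelyContinuous.mk fun A hAm hA0 => ?_
    rw [Measure.map_apply hm hAm] at hA0
    have := key _ (hm hAm) hA0
    have hAA : gwFlip ⁻¹' (gwFlip ⁻¹' A) = A := by
      ext x; simp [hinvol x]
    rwa [hAA] at this
end
end

section
/- Let H be a complex Hilbert space and let 𝒮 be a set of bounded ℂ-linear operators on H, each of which is skew-adjoint (T* = −T), such that the only closed complex subspaces of H invariant under every member of 𝒮 are {0} and H. If U is a closed real-linear subspace of H invariant under every member of 𝒮 with U ≠ {0} and U ≠ H, then U is an invariant real form of H: U ∩ iU = {0} and every element of H can be written as u + i·v with u, v ∈ U. -/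
/-!
`U ∩ iU` is a closed `𝒮`-invariant complex subspace contained in `U ≠ H`, hence zero.

For the spanning part let `P` be the real orthogonal projection onto `U`. Since every `T ∈ 𝒮` is
skew for the real inner product `re ⟪·, ·⟫`, it also preserves the real orthogonal complement of
`U`, so `P` commutes with `𝒮`, and so does the self-adjoint `ℂ`-linear operator `A = P - i P i`.
Schur's lemma makes `A` a real scalar `c`: if the spectrum of `A` contained two points, continuous
functions `f`, `g` with `g f = 0` separating them would give `f(A), g(A) ≠ 0` commuting with `𝒮`
and `g(A) f(A) = 0`, so `ker g(A)` would be a nontrivial closed invariant subspace. For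
`0 ≠ u ∈ U`, `A u = c u` reads `i P(i u) = (1 - c) u ∈ U ∩ iU`, which forces `c = 1`; then
`h = A h = P h + i (-P(i h))`.
-/

open scoped InnerProductSpace
open Complex (I)

theorem Complex.smul_eq_re_smul_add_im_smul {E : Type*} [AddCommGroup E] [Module ℂ E]
    (c : ℂ) (x : E) : c • x = c.re • x + c.im • (I • x) := by
  conv_lhs => rw [← Complex.re_add_im c]
  rw [add_smul, mul_smul, Complex.coe_smul, Complex.coe_smul]

namespace Submodule

variable {E : Type*} [AddCommGroup E] [Module ℂ E] {U : Submodule ℝ E}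

/-- The largest `ℂ`-subspace contained in the real subspace `U`. -/
def complexCore (U : Submodule ℝ E) : Submodule ℂ E where
  carrier := {x | ∀ c : ℂ, c • x ∈ U}
  add_mem' hx hy c := by simpa only [smul_add] using U.add_mem (hx c) (hy c)
  zero_mem' c := by simp
  smul_mem' c _ hx d := by simpa only [smul_smul] using hx (d * c)

theorem mem_complexCore_iff {x : E} : x ∈ U.complexCore ↔ x ∈ U ∧ I • x ∈ U := by
  refine ⟨fun hx => ⟨by simpa using hx 1, hx I⟩, fun ⟨hx, hIx⟩ c => ?_⟩
  rw [Complex.smul_eq_re_smul_add_im_smul]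
  exact U.add_mem (U.smul_mem _ hx) (U.smul_mem _ hIx)

theorem mem_of_mem_complexCore {x : E} (hx : x ∈ U.complexCore) : x ∈ U :=
  (mem_complexCore_iff.mp hx).1

theorem isClosed_complexCore [TopologicalSpace E] [ContinuousConstSMul ℂ E]
    (hU : IsClosed (U : Set E)) : IsClosed (U.complexCore : Set E) := by
  have : (U.complexCore : Set E) = ⋂ c : ℂ, (c • ·) ⁻¹' U := by ext; simp [complexCore]
  rw [this]
  exact isClosed_iInter fun c => hU.preimage (continuous_const_smul c)

theorem apply_mem_complexCore {T : E →ₗ[ℂ] E} (hT : ∀ u ∈ U, T u ∈ U) {x : E}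
    (hx : x ∈ U.complexCore) : T x ∈ U.complexCore := fun c => by
  simpa only [map_smul] using hT _ (hx c)

theorem inter_I_smul_image_eq_zero (h : U.complexCore = ⊥) :
    (U : Set E) ∩ (I • ·) '' U = {0} := by
  refine Set.eq_singleton_iff_unique_mem.mpr ⟨⟨U.zero_mem, 0, U.zero_mem, smul_zero I⟩, ?_⟩
  rintro _ ⟨hIu, u, hu, rfl⟩
  have : u ∈ U.complexCore := mem_complexCore_iff.mpr ⟨hu, hIu⟩
  rw [h, mem_bot] at this
  simp [this]

end Submodule

def IsTopologicallyIrreducible {𝕜 E : Type*} [Ring 𝕜] [AddCommGroup E] [Module 𝕜 E]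
    [TopologicalSpace E] (𝒮 : Set (E →L[𝕜] E)) : Prop :=
  ∀ V : Submodule 𝕜 E, IsClosed (V : Set E) → (∀ T ∈ 𝒮, ∀ v ∈ V, T v ∈ V) → V = ⊥ ∨ V = ⊤

namespace IsTopologicallyIrreducible

theorem eq_zero_of_mul_eq_zero {𝕜 E : Type*} [Ring 𝕜] [AddCommGroup E] [Module 𝕜 E]
    [TopologicalSpace E] [T1Space E] {𝒮 : Set (E →L[𝕜] E)} (hirr : IsTopologicallyIrreducible 𝒮)
    {F G : E →L[𝕜] E} (hG : ∀ S ∈ 𝒮, Commute S G) (hGF : G * F = 0) (hF : F ≠ 0) :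
    G = 0 := by
  have hinv : ∀ S ∈ 𝒮, ∀ v ∈ G.ker, S v ∈ G.ker := fun S hS v hv => by
    have hSG : G (S v) = S (G v) := congrArg (· v) (hG S hS).eq.symm
    rw [LinearMap.mem_ker, ContinuousLinearMap.coe_coe] at hv ⊢
    rw [hSG, hv, map_zero]
  refine (hirr _ G.isClosed_ker hinv).elim (fun hbot => absurd ?_ hF) fun htop => ?_
  · ext x
    have : F x ∈ G.ker := by simpa using congrArg (· x) hGF
    simpa [hbot] using this
  · exact ContinuousLinearMap.coe_injective (LinearMap.ker_eq_top.mp htop)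

variable {H : Type*} [NormedAddCommGroup H] [InnerProductSpace ℂ H] [CompleteSpace H]
  {𝒮 : Set (H →L[ℂ] H)} {A : H →L[ℂ] H}

theorem spectrum_subsingleton (hirr : IsTopologicallyIrreducible 𝒮) (hA : IsSelfAdjoint A)
    (hcomm : ∀ S ∈ 𝒮, Commute S A) : (spectrum ℝ A).Subsingleton := by
  suffices h : ∀ a ∈ spectrum ℝ A, ∀ b ∈ spectrum ℝ A, ¬ a < b from
    fun a ha b hb => le_antisymm (not_lt.mp (h b hb a ha)) (not_lt.mp (h a ha b hb))
  intro a ha b hb hab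
  set f : ℝ → ℝ := fun t => max ((a + b) / 2 - t) 0
  set g : ℝ → ℝ := fun t => max (t - (a + b) / 2) 0
  have hfg : cfc g A * cfc f A = 0 := by
    rw [← cfc_mul g f A, ← cfc_zero ℝ A]
    refine cfc_congr fun t _ => ?_
    rcases le_total t ((a + b) / 2) with h | h <;> simp [f, g, h]
  have hfa : 0 < ‖f a‖ := norm_pos_iff.mpr (lt_max_of_lt_left (by linarith)).ne'
  have hgb : 0 < ‖g b‖ := norm_pos_iff.mpr (lt_max_of_lt_left (by linarith)).ne'
  have hf : cfc f A ≠ 0 := fun h0 => by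
    simpa [h0] using hfa.trans_le (norm_apply_le_norm_cfc f A ha)
  have hg : cfc g A = 0 :=
    hirr.eq_zero_of_mul_eq_zero (fun S hS => ((hcomm S hS).symm.cfc_real g).symm) hfg hf
  simpa [hg] using hgb.trans_le (norm_apply_le_norm_cfc g A hb)

theorem exists_eq_algebraMap (hirr : IsTopologicallyIrreducible 𝒮) (hA : IsSelfAdjoint A)
    (hcomm : ∀ S ∈ 𝒮, Commute S A) : ∃ c : ℝ, A = algebraMap ℝ (H →L[ℂ] H) c := by
  obtain ⟨c, hc⟩ : ∃ c : ℝ, spectrum ℝ A ⊆ {c} := by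
    rcases (hirr.spectrum_subsingleton hA hcomm).eq_empty_or_singleton with h | ⟨c, h⟩
    · exact ⟨0, by simp [h]⟩
    · exact ⟨c, h.le⟩
  exact ⟨c, CFC.eq_algebraMap_of_spectrum_subset_singleton A c hc⟩

end IsTopologicallyIrreducible

theorem Submodule.starProjection_apply_comm_of_skew {𝕜 E : Type*} [RCLike 𝕜]
    [NormedAddCommGroup E] [InnerProductSpace 𝕜 E] (K : Submodule 𝕜 E) [K.HasOrthogonalProjection]
    {T : E →L[𝕜] E} (hT : ∀ x y, ⟪T x, y⟫_𝕜 = -⟪x, T y⟫_𝕜) (hK : ∀ u ∈ K, T u ∈ K) (x : E) :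
    K.starProjection (T x) = T (K.starProjection x) := by
  refine K.eq_starProjection_of_mem_of_inner_eq_zero (hK _ (K.starProjection_apply_mem x))
    fun w hw => ?_
  rw [← map_sub, hT, K.starProjection_inner_eq_zero x _ (hK w hw), neg_zero]

theorem LinearMap.isSymmetric_iff_re_inner {H : Type*} [NormedAddCommGroup H]
    [InnerProductSpace ℂ H] {A : H →ₗ[ℂ] H} :
    A.IsSymmetric ↔ ∀ x y, (⟪A x, y⟫_ℂ).re = (⟪x, A y⟫_ℂ).re := by
  refine ⟨fun hA x y => by rw [hA], fun hA x y => Complex.ext (hA x y) ?_⟩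
  simpa using hA x (I • y)

namespace ContinuousLinearMap

variable {H : Type*} [NormedAddCommGroup H] [InnerProductSpace ℂ H]

/-- Twice the `ℂ`-linear part `(P - i P i) / 2` of a real-linear map `P`. -/
noncomputable def complexLinearPart (P : H →L[ℝ] H) : H →L[ℂ] H where
  toFun x := P x - I • P (I • x)
  map_add' x y := by simp only [map_add, smul_add]; abel
  map_smul' c x := by
    have hI : ∀ y : H, I • I • y = -y := fun y => by rw [smul_smul, Complex.I_mul_I, neg_one_smul]
    rw [RingHom.id_apply, Complex.smul_eq_re_smul_add_im_smul c x,
      Complex.smul_eq_re_smul_add_im_smul c (_ - _)]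
    simp only [map_add, map_smul, smul_add, smul_sub, smul_comm I (_ : ℝ), hI, map_neg, smul_neg]
    module
  cont := by fun_prop

@[simp]
theorem complexLinearPart_apply (P : H →L[ℝ] H) (x : H) :
    complexLinearPart P x = P x - I • P (I • x) :=
  rfl

theorem commute_complexLinearPart {P : H →L[ℝ] H} {T : H →L[ℂ] H}
    (hPT : ∀ x, P (T x) = T (P x)) : Commute T (complexLinearPart P) := by
  ext x
  simp [← hPT]

theorem isSelfAdjoint_complexLinearPart [CompleteSpace H] {P : H →L[ℝ] H}
    (hP : ∀ x y, (⟪P x, y⟫_ℂ).re = (⟪x, P y⟫_ℂ).re) : IsSelfAdjoint (complexLinearPart P) := by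
  rw [isSelfAdjoint_iff_isSymmetric, LinearMap.isSymmetric_iff_re_inner]
  intro x y
  -- `hP` at `(i x, i y)` exchanges the two `i P i` terms.
  have h := hP (I • x) (I • y)
  simp only [coe_coe, complexLinearPart_apply, inner_sub_left, inner_sub_right, inner_smul_left,
    inner_smul_right, Complex.conj_I, Complex.sub_re, Complex.mul_re, Complex.I_re, Complex.I_im,
    Complex.neg_re, Complex.neg_im, hP x y] at h ⊢
  linarith

end ContinuousLinearMap

open Submodule ContinuousLinearMap in
/-- let `𝒮` be a set of bounded skew-adjoint `ℂ`-linear operators on a complex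
Hilbert space `H` admitting no nontrivial closed invariant complex subspace.  Then any closed
real subspace `U` invariant under `𝒮` with `U ≠ {0}` and `U ≠ H` is an invariant real form:
`U ∩ iU = {0}` and every element of `H` is `u + i v` with `u, v ∈ U`. -/
theorem real_invariant_subspace_is_real_form
    {H : Type*} [NormedAddCommGroup H] [InnerProductSpace ℂ H] [CompleteSpace H]
    (𝒮 : Set (H →L[ℂ] H))
    (hskew : ∀ T ∈ 𝒮, ContinuousLinearMap.adjoint T = -T)
    (hirr : ∀ V : Submodule ℂ H, IsClosed (V : Set H) →
      (∀ T ∈ 𝒮, ∀ v ∈ V, T v ∈ V) → V = ⊥ ∨ V = ⊤)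
    (U : Submodule ℝ H)
    (hUclosed : IsClosed (U : Set H))
    (hUinv : ∀ T ∈ 𝒮, ∀ u ∈ U, T u ∈ U)
    (hU0 : U ≠ ⊥) (hUH : U ≠ ⊤) :
    ((U : Set H) ∩ ((fun v => Complex.I • v) '' (U : Set H)) = {0}) ∧
    (∀ h : H, ∃ u ∈ U, ∃ v ∈ U, h = u + Complex.I • v) := by
  let _ : InnerProductSpace ℝ H := InnerProductSpace.complexToReal
  have : CompleteSpace U := hUclosed.completeSpace_coe
  have hcore : U.complexCore = ⊥ :=
    (hirr _ (isClosed_complexCore hUclosed) fun T hT _ => apply_mem_complexCore (hUinv T hT)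
      ).resolve_right fun h => hUH <| eq_top_iff.mpr fun x _ =>
        mem_of_mem_complexCore (h ▸ mem_top : x ∈ U.complexCore)
  refine ⟨inter_I_smul_image_eq_zero hcore, fun h => ?_⟩
  set P := U.starProjection
  have hPT : ∀ T ∈ 𝒮, ∀ x, P (T x) = T (P x) := fun T hT =>
    U.starProjection_apply_comm_of_skew (T := T.restrictScalars ℝ)
      (fun x y => by simp [real_inner_eq_re_inner, ← adjoint_inner_right, hskew T hT])
      (hUinv T hT)
  obtain ⟨c, hc⟩ := IsTopologicallyIrreducible.exists_eq_algebraMap hirr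
    (isSelfAdjoint_complexLinearPart U.inner_starProjection_left_eq_right)
    fun T hT => commute_complexLinearPart (hPT T hT)
  have hA : ∀ x, P x - I • P (I • x) = c • x := fun x => by simpa using congrArg (· x) hc
  obtain ⟨u₀, hu₀, hu₀_ne⟩ := exists_mem_ne_zero_of_ne_bot hU0
  have hc1 : c = 1 := by
    have hIu : I • P (I • u₀) = (1 - c) • u₀ := by
      rw [sub_smul, one_smul, ← hA u₀, starProjection_eq_self_iff.mpr hu₀]
      abel
    have h0 : P (I • u₀) = 0 := by
      rw [← mem_bot ℂ, ← hcore, mem_complexCore_iff, hIu]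
      exact ⟨U.starProjection_apply_mem _, U.smul_mem _ hu₀⟩
    rw [h0, smul_zero, eq_comm, smul_eq_zero, sub_eq_zero] at hIu
    exact (hIu.resolve_right hu₀_ne).symm
  refine ⟨P h, U.starProjection_apply_mem h, -P (I • h),
    U.neg_mem (U.starProjection_apply_mem _), ?_⟩
  rw [smul_neg, ← sub_eq_add_neg, hA, hc1, one_smul]
end

section
/- Let Δ be the countable set of finitely supported 0-1 sequences indexed by the positive integers, with componentwise addition modulo 2, and let H = ℓ²(Δ; ℂ). For each k ≥ 1 define operators on H by (J_k f)(x) = (−1)^{x_1+⋯+x_{k−1}+1} · i · f(x+δ_k) and (J'_k f)(x) = (−1)^{x_k} · i · (J_k f)(x), where δ_k is the sequence with 1 in the k-th place and 0 elsewhere. Then the only closed complex subspaces of ℓ²(Δ; ℂ) invariant under J_k and J'_k for all k ≥ 1 are {0} and ℓ²(Δ; ℂ). -/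
/-!
`J_k J'_k` is multiplication by `i (-1)^{x_k}`, so a closed invariant subspace `V` is stable
under the coordinate projections `f ↦ 1_{x_k = b} f`. Applying these for all `k < N` to some
`f ∈ V` and letting `N → ∞` (dominated convergence in `ℓ²`) shows `f(x₀) e_{x₀} ∈ V`, where `e_x`
is the standard basis. As `J_k e_y` is a unimodular multiple of `e_{y + δ_k}`, a single
`e_{x₀} ∈ V` puts every `e_z` in `V`, and these span a dense subspace.
-/

/-!
`GWDelta` is the group `Δ` of finitely supported 0-1 sequences indexed by the positive
integers, with componentwise addition mod 2; the Lean coordinate `i : ℕ` represents the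
paper's coordinate `i + 1` (so the Lean index `k` corresponds to the paper's index `k + 1`).
`FockH = ℓ²(Δ; ℂ)`, and `Finsupp.single k 1` is the element `δ_k`.
-/

open MeasureTheory Complex

noncomputable section

abbrev GWDelta : Type := ℕ →₀ ZMod 2

abbrev FockH : Type := lp (fun _ : GWDelta => ℂ) 2

open Filter Topology ENNReal

namespace lp

variable {p : ℝ≥0∞} [Fact (1 ≤ p)]

theorem tendsto_of_tendsto_pi_of_norm_sub_le {α ι : Type*} {E : α → Type*}
    [∀ a, NormedAddCommGroup (E a)] (hp : p ≠ ∞) {l : Filter ι} {F : ι → lp E p} {f g : lp E p}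
    (hlim : ∀ a, Tendsto (fun i => F i a) l (𝓝 (f a)))
    (hdom : ∀ i a, ‖F i a - f a‖ ≤ ‖g a‖) : Tendsto F l (𝓝 f) := by
  have hp' : 0 < p.toReal := ENNReal.toReal_pos (one_pos.trans_le Fact.out).ne' hp
  have hpow : Tendsto (fun i => ‖F i - f‖ ^ p.toReal) l (𝓝 0) := by
    simp_rw [norm_rpow_eq_tsum hp', coeFn_sub, Pi.sub_apply]
    rw [← tsum_zero]
    refine tendsto_tsum_of_dominated_convergence (bound := fun a => ‖g a‖ ^ p.toReal)
      ((lp.memℓp g).summable hp') (fun a => ?_) (.of_forall fun i a => ?_)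
    · have := (((hlim a).sub_const (f a)).norm.rpow_const (.inr hp'.le))
      simpa [Real.zero_rpow hp'.ne'] using this
    · rw [Real.norm_of_nonneg (by positivity)]
      gcongr
      exact hdom i a
  have := ((Real.continuous_rpow_const (inv_nonneg.2 hp'.le)).tendsto 0).comp hpow
  rw [Real.zero_rpow (inv_ne_zero hp'.ne')] at this
  refine tendsto_iff_norm_sub_tendsto_zero.2 (this.congr fun i => ?_)
  simp [← Real.rpow_mul (norm_nonneg _), hp'.ne']

theorem eq_top_of_single_mem {α 𝕜 : Type*} [DecidableEq α] [NormedField 𝕜] (hp : p ≠ ∞)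
    {V : Submodule 𝕜 (lp (fun _ : α => 𝕜) p)}
    (hV : IsClosed (V : Set (lp (fun _ : α => 𝕜) p)))
    (hsingle : ∀ a, lp.single p a (1 : 𝕜) ∈ V) : V = ⊤ := by
  refine Submodule.eq_top_iff'.2 fun f => hV.mem_of_tendsto (lp.hasSum_single hp f)
    (.of_forall fun s => V.sum_mem fun a _ => ?_)
  simpa [← lp.single_smul] using V.smul_mem (f a) (hsingle a)

theorem single_mem_of_restrict_coord_mem {M : Type*} [Zero M] [DecidableEq M]
    {E : (ℕ →₀ M) → Type*} [∀ x, NormedAddCommGroup (E x)] (hp : p ≠ ∞)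
    {V : Set (lp E p)} (hV : IsClosed V)
    (hrestrict : ∀ k b, ∀ f ∈ V, ∃ g ∈ V, ∀ x, g x = if x k = b then f x else 0)
    {f : lp E p} (hf : f ∈ V) (x₀ : ℕ →₀ M) : lp.single p x₀ (f x₀) ∈ V := by
  have hcyl : ∀ N, ∃ g ∈ V, ∀ x, g x = if ∀ k < N, x k = x₀ k then f x else 0 := by
    intro N
    induction N with
    | zero => exact ⟨f, hf, fun x => by simp⟩
    | succ N ih =>
      obtain ⟨g, hgV, hg⟩ := ih
      obtain ⟨g', hg'V, hg'⟩ := hrestrict N (x₀ N) g hgV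
      refine ⟨g', hg'V, fun x => ?_⟩
      simp only [hg', hg, Nat.lt_succ_iff_lt_or_eq, or_imp, forall_and, forall_eq, ite_and]
      grind
  choose G hGV hG using hcyl
  refine hV.mem_of_tendsto (b := atTop)
    (tendsto_of_tendsto_pi_of_norm_sub_le hp (g := f) (fun x => ?_) (fun N x => ?_))
    (.of_forall hGV)
  · by_cases hx : x = x₀
    · subst hx
      simp [hG]
    · obtain ⟨k, hk⟩ : ∃ k, x k ≠ x₀ k := by
        by_contra! h
        exact hx (Finsupp.ext h)
      refine tendsto_const_nhds.congr' ?_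
      filter_upwards [eventually_gt_atTop k] with N hN
      rw [hG, lp.single_apply_ne _ _ _ hx, if_neg fun h => hk (h k hN)]
  · by_cases hx : x = x₀
    · subst hx
      simp [hG]
    · rw [hG, lp.single_apply_ne _ _ _ hx, sub_zero]
      split_ifs <;> simp

end lp

theorem ZMod.neg_one_pow_val_mul_neg_one_pow_val {R : Type*} [Monoid R] [HasDistribNeg R]
    (a b : ZMod 2) : (-1 : R) ^ a.val * (-1) ^ b.val = if a = b then 1 else -1 := by
  obtain rfl | rfl := (by decide : ∀ c : ZMod 2, c = 0 ∨ c = 1) a <;>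
    obtain rfl | rfl := (by decide : ∀ c : ZMod 2, c = 0 ∨ c = 1) b <;> simp [ZMod.val_one]

theorem ZMod.neg_one_pow_val_add {R : Type*} [Ring R] (a b : ZMod 2) :
    (-1 : R) ^ (a + b).val = (-1) ^ a.val * (-1) ^ b.val := by
  rw [ZMod.val_add, ← neg_one_pow_eq_pow_mod_two, pow_add]

def IsFermiFockJ (J : ℕ → FockH → FockH) : Prop :=
  ∀ k f x,
    J k f x = (-1 : ℂ) ^ ((∑ i ∈ Finset.range k, (x i).val) + 1) * I * f (x + Finsupp.single k 1)

def IsFermiFockJ' (J J' : ℕ → FockH → FockH) : Prop :=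
  ∀ k f x, J' k f x = (-1 : ℂ) ^ (x k).val * I * J k f x

namespace FermiFock

variable {J J' : ℕ → FockH → FockH}

theorem add_single_add_single (x : GWDelta) (k : ℕ) :
    x + Finsupp.single k 1 + Finsupp.single k 1 = x := by
  rw [add_assoc, ZModModule.add_self, add_zero]

theorem sum_range_val_add_single (x : GWDelta) (k : ℕ) :
    ∑ i ∈ Finset.range k, ((x + Finsupp.single k (1 : ZMod 2)) i).val =
      ∑ i ∈ Finset.range k, (x i).val :=
  Finset.sum_congr rfl fun i hi => by simp [(Finset.mem_range.1 hi).ne']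

theorem J_J'_apply (hJ : IsFermiFockJ J) (hJ' : IsFermiFockJ' J J') (k : ℕ) (f : FockH)
    (x : GWDelta) : J k (J' k f) x = I * (-1) ^ (x k).val * f x := by
  rw [hJ, hJ', hJ, add_single_add_single, sum_range_val_add_single]
  simp only [Finsupp.add_apply, Finsupp.single_eq_same, ZMod.neg_one_pow_val_add, ZMod.val_one,
    pow_succ]
  have hsq : ((-1 : ℂ) ^ ∑ i ∈ Finset.range k, (x i).val) ^ 2 = 1 := by
    rw [← pow_mul]
    exact (even_two.mul_left _).neg_one_pow
  linear_combination I * (-1) ^ (x k).val * f x * hsq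
    - ((-1) ^ ∑ i ∈ Finset.range k, (x i).val) ^ 2 * I * (-1) ^ (x k).val * f x * I_sq

theorem exists_restrict_coord_mem (hJ : IsFermiFockJ J) (hJ' : IsFermiFockJ' J J')
    {V : Submodule ℂ FockH} (hinv : ∀ k, ∀ f ∈ V, J k f ∈ V ∧ J' k f ∈ V)
    (k : ℕ) (b : ZMod 2) (f : FockH) (hf : f ∈ V) :
    ∃ g ∈ V, ∀ x, g x = if x k = b then f x else 0 := by
  -- `(1 + (-1)^{x_k + b}) / 2` is the indicator of `x_k = b`
  refine ⟨(2 : ℂ)⁻¹ • (f + ((-1) ^ b.val * -I) • J k (J' k f)),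
    V.smul_mem _ (V.add_mem hf (V.smul_mem _ (hinv k _ (hinv k f hf).2).1)), fun x => ?_⟩
  have hsign := ZMod.neg_one_pow_val_mul_neg_one_pow_val (R := ℂ) (x k) b
  simp only [lp.coeFn_smul, lp.coeFn_add, Pi.smul_apply, Pi.add_apply, smul_eq_mul,
    J_J'_apply hJ hJ']
  split_ifs at hsign ⊢ <;>
    linear_combination (2⁻¹ * f x) * hsign - (2⁻¹ * (-1) ^ b.val * (-1) ^ (x k).val * f x) * I_sq

theorem J_single (hJ : IsFermiFockJ J) (k : ℕ) (y : GWDelta) :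
    J k (lp.single 2 y 1) = ((-1 : ℂ) ^ ((∑ i ∈ Finset.range k, (y i).val) + 1) * I) •
      lp.single 2 (y + Finsupp.single k 1) 1 := by
  ext x
  rw [hJ, lp.coeFn_smul, Pi.smul_apply]
  by_cases hx : x = y + Finsupp.single k 1
  · subst hx
    rw [add_single_add_single, lp.single_apply_self, lp.single_apply_self,
      sum_range_val_add_single, smul_eq_mul, mul_one]
  · have : x + Finsupp.single k 1 ≠ y := fun h => hx (by rw [← h, add_single_add_single])
    rw [lp.single_apply_ne _ _ _ hx, lp.single_apply_ne _ _ _ this, smul_zero, mul_zero]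

theorem single_add_mem_of_single_mem (hJ : IsFermiFockJ J) {V : Submodule ℂ FockH}
    (hinv : ∀ k, ∀ f ∈ V, J k f ∈ V) (z : GWDelta) :
    ∀ y, lp.single 2 y (1 : ℂ) ∈ V → lp.single 2 (y + z) (1 : ℂ) ∈ V := by
  induction z using Finsupp.induction_linear with
  | zero => simp
  | add z₁ z₂ h₁ h₂ => exact fun y hy => add_assoc y z₁ z₂ ▸ h₂ _ (h₁ y hy)
  | single k b =>
    intro y hy
    obtain rfl | rfl := (by decide : ∀ c : ZMod 2, c = 0 ∨ c = 1) b
    · simpa using hy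
    have hc : (-1 : ℂ) ^ ((∑ i ∈ Finset.range k, (y i).val) + 1) * I ≠ 0 := by simp
    simpa [J_single hJ, V.smul_mem_iff hc] using hinv k _ hy

theorem single_mem_of_single_mem (hJ : IsFermiFockJ J) {V : Submodule ℂ FockH}
    (hinv : ∀ k, ∀ f ∈ V, J k f ∈ V) {y : GWDelta} (hy : lp.single 2 y (1 : ℂ) ∈ V)
    (z : GWDelta) : lp.single 2 z (1 : ℂ) ∈ V := by
  simpa [← add_assoc, ZModModule.add_self] using
    single_add_mem_of_single_mem hJ hinv (y + z) y hy

end FermiFock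

/-- the Fermi–Fock representation, given on `ℓ²(Δ; ℂ)` by
`(J_k f)(x) = (-1)^{x_1+⋯+x_{k-1}+1} i f(x + δ_k)` and `(J'_k f)(x) = (-1)^{x_k} i (J_k f)(x)`,
admits no nontrivial closed invariant complex subspace. -/
theorem fermiFock_irreducible_complex
    (J J' : ℕ → FockH → FockH)
    (hJ : ∀ (k : ℕ) (f : FockH) (x : GWDelta),
      (J k f : ∀ _ : GWDelta, ℂ) x =
        (-1 : ℂ) ^ ((∑ i ∈ Finset.range k, (x i).val) + 1) * Complex.I *
          (f : ∀ _ : GWDelta, ℂ) (x + Finsupp.single k 1))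
    (hJ' : ∀ (k : ℕ) (f : FockH) (x : GWDelta),
      (J' k f : ∀ _ : GWDelta, ℂ) x =
        (-1 : ℂ) ^ (x k).val * Complex.I * (J k f : ∀ _ : GWDelta, ℂ) x) :
    ∀ V : Submodule ℂ FockH, IsClosed (V : Set FockH) →
      (∀ k : ℕ, ∀ f ∈ V, J k f ∈ V ∧ J' k f ∈ V) →
      V = ⊥ ∨ V = ⊤ := by
  intro V hV hinv
  refine or_iff_not_imp_left.2 fun hne => ?_
  obtain ⟨f, hfV, hf0⟩ := (Submodule.ne_bot_iff V).1 hne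
  obtain ⟨x₀, hx₀⟩ : ∃ x₀, f x₀ ≠ 0 := by
    by_contra! h
    exact hf0 (lp.ext (funext h))
  have hfx₀ : lp.single 2 x₀ (f x₀) ∈ V :=
    lp.single_mem_of_restrict_coord_mem ofNat_ne_top hV
      (FermiFock.exists_restrict_coord_mem hJ hJ' hinv) hfV x₀
  have hx₀V : lp.single 2 x₀ (1 : ℂ) ∈ V := by
    simpa [← lp.single_smul, hx₀] using V.smul_mem (f x₀)⁻¹ hfx₀
  exact lp.eq_top_of_single_mem ofNat_ne_top hV
    (FermiFock.single_mem_of_single_mem hJ (fun k f hf => (hinv k f hf).1) hx₀V)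
end
end

section
/- Let H = L²(X, μ_X; ℂ) and for each k ≥ 1 define operators on H by (J_k f)(x) = (−1)^{x_1+⋯+x_{k−1}+1} · i · f(x+δ_k) and (J'_k f)(x) = (−1)^{x_k} · i · (J_k f)(x) (these are well defined since translation by δ_k preserves μ_X). Then the only closed complex subspaces of H invariant under J_k and J'_k for all k ≥ 1 are {0} and H. -/
/-!
Common setup: `GWX` is the compact abelian group `X = ∏_{k ≥ 1} {0,1}` of 0-1 sequences
(with componentwise addition mod 2 and the product σ-algebra, which is generated by the
sets `X_k = {x : x_k = 1}`).  The coordinate `i : ℕ` of `x : GWX` represents the paper's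
coordinate `x_{i+1}`, so the Lean index `k : ℕ` corresponds to the paper's index `k + 1`
throughout; in particular the paper's sign `(-1)^k` becomes `(-1)^(k+1)` here.
-/

open MeasureTheory Complex Filter
open scoped ENNReal

noncomputable section

/-!
An invariant subspace `V` is stable under multiplication by the Rademacher functions
`(-1)^{x_k} = i J'_k J_k` (as `J_k² = -1`), hence by all Walsh functions, and then also under the
translations `x ↦ x + δ_k`, which are `J_k` up to a Walsh factor. If `0 ≠ f ∈ V` and `g ⊥ V`, each
product `conj (f (· + y)) * g` with `y` finitely supported is orthogonal to every Walsh function,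
so it vanishes: the Walsh functions span the indicators of cylinder sets. Thus `g` vanishes on the
union of the translates of `{f ≠ 0}`. That union is translation invariant, and an invariant set has
measure `0` or `1`, since its centred indicator is orthogonal to every Walsh function, the
translations flipping the sign of each nonconstant one.
-/

open Set ComplexConjugate

lemma zmod_two_cases (v : ZMod 2) : v = 0 ∨ v = 1 := by decide +revert

lemma add_add_self {G : Type*} [AddCommGroup G] [Module (ZMod 2) G] (x y : G) : x + y + y = x := by
  rw [add_assoc, ZModModule.add_self, add_zero]

theorem setIntegral_eq_zero_of_isPiSystem {α E : Type*} [m : MeasurableSpace α]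
    [NormedAddCommGroup E] [NormedSpace ℝ E] {μ : Measure α} {f : α → E} {S : Set (Set α)}
    (hgen : m = MeasurableSpace.generateFrom S) (hS : IsPiSystem S) (hf : Integrable f μ)
    (huniv : ∫ x, f x ∂μ = 0) (hSf : ∀ s ∈ S, ∫ x in s, f x ∂μ = 0) {s : Set α}
    (hs : MeasurableSet s) : ∫ x in s, f x ∂μ = 0 := by
  induction s, hs using MeasurableSpace.induction_on_inter hgen hS with
  | empty => simp
  | basic s hs => exact hSf s hs
  | compl s hs ih => rwa [← integral_add_compl hs hf, ih, zero_add] at huniv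
  | iUnion s hdisj hs ih => simp [integral_iUnion hs hdisj hf.integrableOn, ih]

def rademacher (k : ℕ) (x : GWX) : ℂ := (-1) ^ (x k).val

def walsh (t : Finset ℕ) : GWX → ℂ := ∏ i ∈ t, rademacher i

lemma walsh_apply (t : Finset ℕ) (x : GWX) : walsh t x = ∏ i ∈ t, rademacher i x :=
  Finset.prod_apply x t _

@[simp]
lemma walsh_empty : walsh ∅ = 1 := Finset.prod_empty

lemma rademacher_mul_self (k : ℕ) : rademacher k * rademacher k = 1 := by
  ext x
  simp only [Pi.mul_apply, rademacher, Pi.one_apply, ← pow_add, ← two_mul, pow_mul]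
  norm_num

lemma rademacher_add_gwDelta_self (k : ℕ) (x : GWX) :
    rademacher k (x + gwDelta k) = -rademacher k x := by
  simp only [rademacher, Pi.add_apply, gwDelta, if_true]
  rcases zmod_two_cases (x k) with h | h <;> rw [h]
  · simp [ZMod.val_one]
  · simp [ZMod.val_one, show (1 + 1 : ZMod 2) = 0 from rfl]

lemma rademacher_add_gwDelta_of_ne {i k : ℕ} (h : i ≠ k) (x : GWX) :
    rademacher i (x + gwDelta k) = rademacher i x := by
  simp [rademacher, gwDelta, h]

lemma walsh_add_gwDelta {t : Finset ℕ} {k : ℕ} (hk : k ∈ t) (x : GWX) :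
    walsh t (x + gwDelta k) = -walsh t x := by
  rw [walsh_apply, walsh_apply, ← Finset.mul_prod_erase _ _ hk, ← Finset.mul_prod_erase _ _ hk,
    rademacher_add_gwDelta_self, neg_mul,
    Finset.prod_congr rfl fun i hi => rademacher_add_gwDelta_of_ne (Finset.ne_of_mem_erase hi) x]

lemma rademacher_mul_walsh (k : ℕ) (t : Finset ℕ) : ∃ t', rademacher k * walsh t = walsh t' := by
  by_cases hk : k ∈ t
  · refine ⟨t.erase k, ?_⟩
    rw [walsh, ← Finset.mul_prod_erase _ _ hk, ← mul_assoc, rademacher_mul_self, one_mul, walsh]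
  · exact ⟨insert k t, (Finset.prod_insert hk).symm⟩

lemma norm_walsh (t : Finset ℕ) (x : GWX) : ‖walsh t x‖ = 1 := by
  simp [walsh_apply, rademacher]

lemma conj_walsh (t : Finset ℕ) (x : GWX) : conj (walsh t x) = walsh t x := by
  simp [walsh_apply, rademacher]

lemma measurable_rademacher (k : ℕ) : Measurable (rademacher k) :=
  (measurable_of_countable fun v : ZMod 2 => (-1 : ℂ) ^ v.val).comp (measurable_pi_apply k)

lemma measurable_walsh (t : Finset ℕ) : Measurable (walsh t) :=
  Finset.prod_induction _ Measurable (fun _ _ => Measurable.mul) measurable_one fun i _ =>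
    measurable_rademacher i

def walshSpan : Submodule ℂ (GWX → ℂ) := Submodule.span ℂ (range walsh)

lemma rademacher_mul_mem_walshSpan (k : ℕ) {φ : GWX → ℂ} (hφ : φ ∈ walshSpan) :
    rademacher k * φ ∈ walshSpan := by
  refine (Submodule.span_le (p := walshSpan.comap (LinearMap.mulLeft ℂ (rademacher k)))).mpr ?_ hφ
  rintro _ ⟨t, rfl⟩
  obtain ⟨t', ht'⟩ := rademacher_mul_walsh k t
  exact Submodule.subset_span ⟨t', ht'.symm⟩

lemma eq_add_mul_neg_one_pow (ψ : ZMod 2 → ℂ) (v : ZMod 2) :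
    ψ v = (ψ 0 + ψ 1) / 2 + (ψ 0 - ψ 1) / 2 * (-1) ^ v.val := by
  rcases zmod_two_cases v with rfl | rfl <;> simp [ZMod.val_one] <;> ring

lemma prod_comp_mem_walshSpan (ψ : ℕ → ZMod 2 → ℂ) (s : Finset ℕ) :
    (fun x : GWX => ∏ i ∈ s, ψ i (x i)) ∈ walshSpan := by
  induction s using Finset.induction_on with
  | empty =>
    simp only [Finset.prod_empty]
    exact Submodule.subset_span ⟨∅, walsh_empty⟩
  | insert j s hj ih =>
    have hexpand : (fun x : GWX => ∏ i ∈ insert j s, ψ i (x i)) =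
        ((ψ j 0 + ψ j 1) / 2) • (fun x : GWX => ∏ i ∈ s, ψ i (x i)) +
          ((ψ j 0 - ψ j 1) / 2) • (rademacher j * fun x : GWX => ∏ i ∈ s, ψ i (x i)) := by
      ext x
      simp only [Finset.prod_insert hj, Pi.add_apply, Pi.smul_apply, Pi.mul_apply, smul_eq_mul,
        rademacher]
      rw [eq_add_mul_neg_one_pow (ψ j) (x j)]
      ring
    rw [hexpand]
    exact add_mem (Submodule.smul_mem _ _ ih)
      (Submodule.smul_mem _ _ (rademacher_mul_mem_walshSpan j ih))

section WalshCompleteness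

variable {μ : Measure GWX} {h : GWX → ℂ}

lemma integral_mul_eq_zero_of_mem_walshSpan (hh : Integrable h μ)
    (hw : ∀ t, ∫ x, walsh t x * h x ∂μ = 0) {φ : GWX → ℂ} (hφ : φ ∈ walshSpan) :
    ∫ x, φ x * h x ∂μ = 0 := by
  suffices Integrable (fun x => φ x * h x) μ ∧ ∫ x, φ x * h x ∂μ = 0 from this.2
  induction hφ using Submodule.span_induction with
  | mem _ hφ =>
    obtain ⟨t, rfl⟩ := hφ
    exact ⟨hh.bdd_mul (measurable_walsh t).aestronglyMeasurable
      (ae_of_all _ fun x => (norm_walsh t x).le), hw t⟩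
  | zero => simp
  | add φ ψ _ _ hφ hψ =>
    simp only [Pi.add_apply, add_mul]
    exact ⟨hφ.1.add hψ.1, by rw [integral_add hφ.1 hψ.1, hφ.2, hψ.2, add_zero]⟩
  | smul c φ _ hφ =>
    simp only [Pi.smul_apply, smul_eq_mul, mul_assoc]
    exact ⟨hφ.1.const_mul c, by rw [integral_const_mul, hφ.2, mul_zero]⟩

theorem ae_eq_zero_of_integral_walsh_mul_eq_zero (hh : Integrable h μ)
    (hw : ∀ t, ∫ x, walsh t x * h x ∂μ = 0) : h =ᵐ[μ] 0 := by
  have hcyl : ∀ A ∈ squareCylinders fun _ => {T : Set (ZMod 2) | MeasurableSet T},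
      ∫ x in A, h x ∂μ = 0 := by
    rintro _ ⟨s, T, -, rfl⟩
    have hA : MeasurableSet ((s : Set ℕ).pi T) :=
      .pi s.countable_toSet fun _ _ => .of_discrete
    have hind : ((s : Set ℕ).pi T).indicator h =
        fun x => (∏ i ∈ s, (T i).indicator 1 (x i)) * h x := by
      ext x
      rw [← indicator_pi_one_apply, ← indicator_mul_left]
      simp
    rw [← integral_indicator hA, hind]
    exact integral_mul_eq_zero_of_mem_walshSpan hh hw (prod_comp_mem_walshSpan _ s)
  have hint : ∫ x, h x ∂μ = 0 := by simpa using hw ∅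
  exact hh.ae_eq_zero_of_forall_setIntegral_eq_zero fun A hA _ =>
    setIntegral_eq_zero_of_isPiSystem generateFrom_squareCylinders.symm
      (isPiSystem_squareCylinders (fun _ => MeasurableSpace.isPiSystem_measurableSet)
        fun _ => .univ) hh hint hcyl hA

end WalshCompleteness

def gwShift (u : Finset ℕ) : GWX := ∑ i ∈ u, gwDelta i

lemma exists_gwShift_eq_add (u : Finset ℕ) (k : ℕ) : ∃ v, gwShift u + gwDelta k = gwShift v := by
  by_cases hk : k ∈ u
  · refine ⟨u.erase k, ?_⟩
    rw [gwShift, ← Finset.add_sum_erase u _ hk, add_right_comm, ZModModule.add_self, zero_add,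
      gwShift]
  · exact ⟨insert k u, by rw [gwShift, gwShift, Finset.sum_insert hk, add_comm]⟩

section Invariant

variable {μ : Measure GWX} (hμ : ∀ k, MeasurePreserving (· + gwDelta k) μ μ)
include hμ

lemma integral_walsh_mul_eq_zero_of_invariant {h : GWX → ℂ} (hh : ∀ k x, h (x + gwDelta k) = h x)
    {t : Finset ℕ} (ht : t.Nonempty) : ∫ x, walsh t x * h x ∂μ = 0 := by
  obtain ⟨k, hk⟩ := ht
  have hflip := (hμ k).integral_comp (measurableEmbedding_addRight (gwDelta k))
    fun x => walsh t x * h x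
  simp only [walsh_add_gwDelta hk, hh, neg_mul, integral_neg] at hflip
  linear_combination (-1 / 2 : ℂ) * hflip

theorem measure_eq_zero_or_one_of_invariant [IsProbabilityMeasure μ] {F : Set GWX}
    (hF : MeasurableSet F) (hFinv : ∀ k, (· + gwDelta k) ⁻¹' F = F) : μ F = 0 ∨ μ F = 1 := by
  set c : ℂ := (μ.real F : ℂ)
  have hinv : ∀ k x, F.indicator (1 : GWX → ℂ) (x + gwDelta k) = F.indicator 1 x := fun k x => by
    conv_rhs => rw [← hFinv k]
    rfl
  have hF1 : Integrable (F.indicator (1 : GWX → ℂ)) μ := (integrable_const (1 : ℂ)).indicator hF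
  have hconst : (fun x => F.indicator 1 x - c) =ᵐ[μ] 0 := by
    refine ae_eq_zero_of_integral_walsh_mul_eq_zero (hF1.sub (integrable_const c)) fun t => ?_
    rcases t.eq_empty_or_nonempty with rfl | ht
    · simp only [walsh_empty, Pi.one_apply, one_mul]
      rw [integral_sub hF1 (integrable_const c), Pi.one_def,
        integral_indicator_const _ hF]
      simp [c]
    · exact integral_walsh_mul_eq_zero_of_invariant hμ (fun k x => by rw [hinv]) ht
  obtain ⟨x, hx⟩ := hconst.exists
  by_cases hxF : x ∈ F
  · have hc : (1 : ℂ) = μ.real F := by simpa [hxF, sub_eq_zero, c] using hx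
    exact Or.inr ((ENNReal.toReal_eq_one_iff _).mp (mod_cast hc.symm))
  · have hc : (μ.real F : ℂ) = 0 := by simpa [hxF, c] using hx
    exact Or.inl ((measureReal_eq_zero_iff).mp (mod_cast hc))

theorem measure_eq_zero_of_forall_gwShift [IsProbabilityMeasure μ] {E G : Set GWX}
    (hE : MeasurableSet E) (hE0 : μ E ≠ 0)
    (hEG : ∀ u, μ ((· + gwShift u) ⁻¹' E ∩ G) = 0) : μ G = 0 := by
  set F := ⋃ u, (· + gwShift u) ⁻¹' E
  have hFmeas : MeasurableSet F := .iUnion fun u => measurable_add_const _ hE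
  have hmem : ∀ k x, x ∈ F → x + gwDelta k ∈ F := by
    simp only [F, mem_iUnion, mem_preimage]
    rintro k x ⟨u, hu⟩
    obtain ⟨v, hv⟩ := exists_gwShift_eq_add u k
    refine ⟨v, ?_⟩
    rwa [← hv, add_comm (gwShift u), ← add_assoc, add_add_self]
  have hFinv : ∀ k, (· + gwDelta k) ⁻¹' F = F := fun k => by
    ext x
    exact ⟨fun hx => add_add_self x (gwDelta k) ▸ hmem k _ hx, hmem k x⟩
  have hF1 : μ F = 1 := (measure_eq_zero_or_one_of_invariant hμ hFmeas hFinv).resolve_left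
    fun h0 => hE0 (measure_mono_null (fun x hx => mem_iUnion.mpr ⟨∅, by simpa [gwShift]⟩) h0)
  have hFG : μ (F ∩ G) = 0 := by rw [iUnion_inter]; exact measure_iUnion_null hEG
  exact measure_mono_null (fun x hx => (em (x ∈ F)).imp (fun hxF => ⟨hxF, hx⟩) id)
    (measure_union_null hFG ((prob_compl_eq_zero_iff hFmeas).mpr hF1))

end Invariant

section Stable

variable (μ : Measure GWX) (V : Submodule ℂ (Lp ℂ 2 μ))

def MulStable (φ : GWX → ℂ) : Prop := ∀ f ∈ V, ∃ g ∈ V, ⇑g =ᵐ[μ] φ * ⇑f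

def TranslateStable (y : GWX) : Prop := ∀ f ∈ V, ∃ g ∈ V, ⇑g =ᵐ[μ] fun x => f (x + y)

variable {μ V}

lemma MulStable.mul {φ ψ : GWX → ℂ} (hφ : MulStable μ V φ) (hψ : MulStable μ V ψ) :
    MulStable μ V (φ * ψ) := fun f hf => by
  obtain ⟨g, hg, hgf⟩ := hψ f hf
  obtain ⟨g', hg', hg'g⟩ := hφ g hg
  refine ⟨g', hg', hg'g.trans ?_⟩
  filter_upwards [hgf] with x hx
  simp [hx, mul_assoc]

lemma mulStable_walsh (h : ∀ k, MulStable μ V (rademacher k)) (t : Finset ℕ) :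
    MulStable μ V (walsh t) :=
  Finset.prod_induction _ _ (fun _ _ => MulStable.mul)
    (fun f hf => ⟨f, hf, ae_of_all _ fun x => by simp⟩) fun k _ => h k

lemma translateStable_gwShift (hμ : ∀ k, MeasurePreserving (· + gwDelta k) μ μ)
    (h : ∀ k, TranslateStable μ V (gwDelta k)) (u : Finset ℕ) :
    TranslateStable μ V (gwShift u) := by
  induction u using Finset.induction_on with
  | empty => exact fun f hf => ⟨f, hf, ae_of_all _ fun x => by simp [gwShift]⟩
  | insert j u hj ih =>
    intro f hf
    obtain ⟨g, hg, hgf⟩ := ih f hf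
    obtain ⟨g', hg', hg'g⟩ := h j g hg
    refine ⟨g', hg', hg'g.trans ?_⟩
    filter_upwards [(hμ j).quasiMeasurePreserving.ae_eq_comp hgf] with x hx
    simpa [gwShift, Finset.sum_insert hj, add_assoc] using hx

lemma conj_mul_ae_eq_zero_of_mem_orthogonal (hW : ∀ t, MulStable μ V (walsh t)) {f g : Lp ℂ 2 μ}
    (hf : f ∈ V) (hg : g ∈ Vᗮ) : (fun x => conj (f x) * g x) =ᵐ[μ] 0 := by
  refine ae_eq_zero_of_integral_walsh_mul_eq_zero ?_ fun t => ?_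
  · simpa [RCLike.inner_apply, mul_comm] using L2.integrable_inner (𝕜 := ℂ) f g
  obtain ⟨a, ha, haf⟩ := hW t f hf
  calc ∫ x, walsh t x * (conj (f x) * g x) ∂μ = inner ℂ a g := by
        rw [L2.inner_def]
        refine integral_congr_ae ?_
        filter_upwards [haf] with x hx
        simp only [hx, Pi.mul_apply, RCLike.inner_apply, map_mul, conj_walsh]
        ring
    _ = 0 := Submodule.inner_right_of_mem_orthogonal ha hg

theorem eq_bot_or_eq_top_of_stable [IsProbabilityMeasure μ]
    (hμ : ∀ k, MeasurePreserving (· + gwDelta k) μ μ) (hV : IsClosed (V : Set (Lp ℂ 2 μ)))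
    (hW : ∀ t, MulStable μ V (walsh t)) (hT : ∀ k, TranslateStable μ V (gwDelta k)) :
    V = ⊥ ∨ V = ⊤ := by
  refine or_iff_not_imp_left.mpr fun hV0 => ?_
  obtain ⟨f, hf, hf0⟩ := V.exists_mem_ne_zero_of_ne_bot hV0
  have : CompleteSpace V := hV.completeSpace_coe
  rw [← Submodule.orthogonal_eq_bot_iff, Submodule.eq_bot_iff]
  intro g hg
  have hsupp : ∀ u, μ ((· + gwShift u) ⁻¹' {x | f x ≠ 0} ∩ {x | g x ≠ 0}) = 0 := by
    intro u
    obtain ⟨f', hf', hf'f⟩ := translateStable_gwShift hμ hT u f hf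
    have hzero : ∀ᵐ x ∂μ, conj (f (x + gwShift u)) * g x = 0 := by
      filter_upwards [conj_mul_ae_eq_zero_of_mem_orthogonal hW hf' hg, hf'f] with x h1 h2
      rwa [h2] at h1
    exact measure_mono_null (fun x ⟨hfx, hgx⟩ => mul_ne_zero ((map_ne_zero _).mpr hfx) hgx)
      (ae_iff.mp hzero)
  have hf0' : μ {x | f x ≠ 0} ≠ 0 := fun h0 => hf0 (Lp.eq_zero_iff_ae_eq_zero.mpr (ae_iff.mpr h0))
  exact Lp.eq_zero_iff_ae_eq_zero.mpr (ae_iff.mpr (measure_eq_zero_of_forall_gwShift hμ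
    ((Lp.stronglyMeasurable f).measurable (measurableSet_singleton 0).compl) hf0' hsupp))

end Stable

section GardingWightman

lemma gwSign_add_gwDelta (k : ℕ) (x : GWX) : gwSign k (x + gwDelta k) = gwSign k x := by
  unfold gwSign
  congr 2
  refine Finset.sum_congr rfl fun i hi => ?_
  simp [gwDelta, (Finset.mem_range.mp hi).ne]

lemma gwSign_mul_self (k : ℕ) (x : GWX) : gwSign k x * gwSign k x = 1 := by
  rw [gwSign, ← pow_add]
  exact Even.neg_one_pow ⟨_, rfl⟩

lemma walsh_range_mul_gwSign (k : ℕ) (x : GWX) : walsh (Finset.range k) x * gwSign k x = -1 := by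
  rw [walsh_apply, gwSign]
  simp only [rademacher, Finset.prod_pow_eq_pow_sum, ← pow_add, ← add_assoc]
  exact Odd.neg_one_pow ⟨_, by rw [two_mul]⟩

variable {μ : Measure GWX} {J J' : ℕ → Lp ℂ 2 μ → Lp ℂ 2 μ}
  (hJ : ∀ k f, (↑(J k f) : GWX → ℂ) =ᵐ[μ] fun x =>
    gwSign k x * Complex.I * (↑f : GWX → ℂ) (x + gwDelta k))
  (hJ' : ∀ k f, (↑(J' k f) : GWX → ℂ) =ᵐ[μ] fun x =>
    (-1 : ℂ) ^ (x k).val * Complex.I * (↑(J k f) : GWX → ℂ) x)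
include hJ

lemma coeFn_J_J (hμ : ∀ k, MeasurePreserving (· + gwDelta k) μ μ) (k : ℕ) (f : Lp ℂ 2 μ) :
    ⇑(J k (J k f)) =ᵐ[μ] -⇑f := by
  filter_upwards [hJ k (J k f), (hμ k).quasiMeasurePreserving.ae_eq_comp (hJ k f)] with x h1 h2
  simp only [Function.comp_apply, add_add_self, gwSign_add_gwDelta] at h2
  rw [h1, h2, Pi.neg_apply]
  linear_combination (I ^ 2 * f x) * gwSign_mul_self k x + f x * I_sq

include hJ' in
lemma coeFn_smul_J'_J (hμ : ∀ k, MeasurePreserving (· + gwDelta k) μ μ) (k : ℕ)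
    (f : Lp ℂ 2 μ) : ⇑(I • J' k (J k f)) =ᵐ[μ] rademacher k * ⇑f := by
  filter_upwards [Lp.coeFn_smul I (J' k (J k f)), hJ' k (J k f), coeFn_J_J hJ hμ k f]
    with x h1 h2 h3
  rw [h1, Pi.smul_apply, h2, h3, Pi.mul_apply, Pi.neg_apply, smul_eq_mul, rademacher]
  linear_combination (-(-1 : ℂ) ^ (x k).val * f x) * I_sq

lemma coeFn_smul_of_walsh_mul_J {k : ℕ} {f g : Lp ℂ 2 μ}
    (hg : ⇑g =ᵐ[μ] walsh (Finset.range k) * ⇑(J k f)) :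
    ⇑(I • g) =ᵐ[μ] fun x => f (x + gwDelta k) := by
  filter_upwards [Lp.coeFn_smul I g, hg, hJ k f] with x h1 h2 h3
  rw [h1, Pi.smul_apply, h2, Pi.mul_apply, h3, smul_eq_mul]
  linear_combination (I ^ 2 * f (x + gwDelta k)) * walsh_range_mul_gwSign k x
    - f (x + gwDelta k) * I_sq

end GardingWightman

/-- The Haar measure `μ_X` is characterized by invariance under all translations. -/
theorem haar_gw_irreducible_complex
    (μX : Measure GWX) [IsProbabilityMeasure μX]
    (hHaar : ∀ y : GWX, μX.map (· + y) = μX)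
    (J J' : ℕ → Lp ℂ 2 μX → Lp ℂ 2 μX)
    (hJ : ∀ k f, (↑(J k f) : GWX → ℂ) =ᵐ[μX] fun x =>
      gwSign k x * Complex.I * (↑f : GWX → ℂ) (x + gwDelta k))
    (hJ' : ∀ k f, (↑(J' k f) : GWX → ℂ) =ᵐ[μX] fun x =>
      (-1 : ℂ) ^ (x k).val * Complex.I * (↑(J k f) : GWX → ℂ) x) :
    ∀ V : Submodule ℂ (Lp ℂ 2 μX), IsClosed (V : Set (Lp ℂ 2 μX)) →
      (∀ k : ℕ, ∀ f ∈ V, J k f ∈ V ∧ J' k f ∈ V) →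
      V = ⊥ ∨ V = ⊤ := by
  intro V hV hVJ
  have hμ : ∀ k, MeasurePreserving (· + gwDelta k) μX μX := fun k =>
    ⟨measurable_add_const _, hHaar _⟩
  have hW : ∀ t, MulStable μX V (walsh t) := mulStable_walsh fun k f hf =>
    ⟨I • J' k (J k f), V.smul_mem I (hVJ k _ (hVJ k f hf).1).2, coeFn_smul_J'_J hJ hJ' hμ k f⟩
  have hT : ∀ k, TranslateStable μX V (gwDelta k) := fun k f hf => by
    obtain ⟨g, hg, hgJ⟩ := hW (Finset.range k) (J k f) (hVJ k f hf).1
    exact ⟨I • g, V.smul_mem I hg, coeFn_smul_of_walsh_mul_J hJ hgJ⟩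
  exact eq_bot_or_eq_top_of_stable hμ hV hW hT
end
end

section
/- There is no measurable function r : X → ℂ with |r(x)| = 1 for μ_X-almost every x such that for every k ≥ 1, r(x+δ_k) = (−1)^k · r(x) for μ_X-almost every x ∈ X. -/
/-!
Common setup: `GWX` is the compact abelian group `X = ∏_{k ≥ 1} {0,1}` of 0-1 sequences
(with componentwise addition mod 2 and the product σ-algebra, which is generated by the
sets `X_k = {x : x_k = 1}`).  The coordinate `i : ℕ` of `x : GWX` represents the paper's
coordinate `x_{i+1}`, so the Lean index `k : ℕ` corresponds to the paper's index `k + 1`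
throughout; in particular the paper's sign `(-1)^k` becomes `(-1)^(k+1)` here.
-/

open MeasureTheory Complex Filter
open scoped ENNReal

noncomputable section

/-!
By Lévy's upward theorem, a real integrable function `f` on a countable product is an
`L¹`-limit of functions `g` depending only on the first `n` coordinates. A measure-preserving
map that fixes those coordinates but negates `f` (translation by `δ_k` with `k > n` and
`(-1)^(k+1) = -1`) gives `‖f + g‖₁ = ‖f - g‖₁`, hence `2‖f‖₁ ≤ 2‖f - g‖₁`. So the real and
imaginary parts of `r` vanish a.e., contradicting `|r| = 1`.
-/

namespace MeasureTheory

namespace Filtration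

lemma iSup_piLE {ι : Type*} [Preorder ι] {X : ι → Type*} [∀ i, MeasurableSpace (X i)] :
    ⨆ i, piLE (X := X) i = MeasurableSpace.pi :=
  le_antisymm (iSup_le piLE.le) <| iSup_le fun i =>
    ((measurable_pi_apply ⟨i, Set.mem_Iic.2 le_rfl⟩).comp
      (comap_measurable (Preorder.restrictLe i))).comap_le.trans (le_iSup (piLE (X := X)) i)

end Filtration

open Filtration

lemma exists_stronglyMeasurable_piLE_eLpNorm_sub_lt {X : ℕ → Type*}
    [∀ i, MeasurableSpace (X i)] {μ : Measure (Π i, X i)} [IsFiniteMeasure μ]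
    {f : (Π i, X i) → ℝ} (hf : Integrable f μ) (hfm : StronglyMeasurable f)
    {ε : ℝ≥0∞} (hε : 0 < ε) :
    ∃ n, ∃ g, StronglyMeasurable[piLE n] g ∧ eLpNorm (f - g) 1 μ < ε := by
  have hlim := hf.tendsto_eLpNorm_condExp (ℱ := piLE) (by rwa [iSup_piLE])
  obtain ⟨n, hn⟩ := (hlim.eventually (gt_mem_nhds hε)).exists
  exact ⟨n, μ[f | piLE n], stronglyMeasurable_condExp, by rwa [eLpNorm_sub_comm]⟩

lemma eLpNorm_le_eLpNorm_sub_of_comp_eq_neg {α E : Type*} [MeasurableSpace α]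
    [NormedAddCommGroup E] [NormedSpace ℝ E] {μ : Measure α} {T : α → α}
    (hT : MeasurePreserving T μ μ) {f g : α → E} (hf : AEStronglyMeasurable f μ)
    (hg : AEStronglyMeasurable g μ) (hfT : f ∘ T =ᵐ[μ] -f) (hgT : g ∘ T =ᵐ[μ] g)
    {p : ℝ≥0∞} (hp : 1 ≤ p) :
    eLpNorm f p μ ≤ eLpNorm (f - g) p μ := by
  have h_add : eLpNorm (f + g) p μ = eLpNorm (f - g) p μ := by
    calc eLpNorm (f + g) p μ = eLpNorm ((f - g) ∘ T) p μ := by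
          rw [← eLpNorm_neg]
          refine eLpNorm_congr_ae ?_
          filter_upwards [hfT, hgT] with x hfx hgx
          simp only [Function.comp_apply] at hfx hgx
          simp [hfx, hgx]
          abel
      _ = eLpNorm (f - g) p μ := eLpNorm_comp_measurePreserving (hf.sub hg) hT
  have h_two : (2 : ℝ≥0∞) * eLpNorm f p μ ≤ 2 * eLpNorm (f - g) p μ := by
    calc (2 : ℝ≥0∞) * eLpNorm f p μ = eLpNorm ((f - g) + (f + g)) p μ := by
          rw [show f - g + (f + g) = 2 • f by abel, eLpNorm_nsmul, Nat.cast_ofNat]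
      _ ≤ eLpNorm (f - g) p μ + eLpNorm (f + g) p μ :=
          eLpNorm_add_le (hf.sub hg) (hf.add hg) hp
      _ = 2 * eLpNorm (f - g) p μ := by rw [h_add, two_mul]
  exact (ENNReal.mul_le_mul_iff_right two_ne_zero ENNReal.ofNat_ne_top).1 h_two

lemma ae_eq_zero_of_comp_eq_neg {X : ℕ → Type*} [∀ i, MeasurableSpace (X i)]
    {μ : Measure (Π i, X i)} [IsFiniteMeasure μ] {f : (Π i, X i) → ℝ}
    (hf : Integrable f μ) (hfm : StronglyMeasurable f)
    (hodd : ∀ n, ∃ T, MeasurePreserving T μ μ ∧ (∀ x, ∀ i ≤ n, T x i = x i) ∧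
      f ∘ T =ᵐ[μ] -f) :
    f =ᵐ[μ] 0 := by
  refine (eLpNorm_eq_zero_iff hf.aestronglyMeasurable one_ne_zero).1 <|
    nonpos_iff_eq_zero.1 <| le_of_forall_gt fun ε hε => ?_
  obtain ⟨n, g, hgm, hfg⟩ := exists_stronglyMeasurable_piLE_eLpNorm_sub_lt hf hfm hε
  obtain ⟨T, hT, hTfix, hfT⟩ := hodd n
  have hgT : g ∘ T = g := funext fun x =>
    hgm.dependsOn_of_piLE fun i hi => hTfix x i (Set.mem_Iic.1 hi)
  refine (eLpNorm_le_eLpNorm_sub_of_comp_eq_neg hT hf.aestronglyMeasurable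
    (hgm.mono (piLE.le n)).aestronglyMeasurable hfT hgT.eventuallyEq le_rfl).trans_lt hfg

end MeasureTheory

/-- there is no measurable unimodular function `r : X → ℂ` with
`r(x + δ_k) = (-1)^k r(x)` `μ_X`-a.e. for every `k ≥ 1` (here `(-1)^(k+1)`, since the Lean
index `k` is the paper's `k + 1`); `μ_X` is the Haar probability measure on `X`,
characterized as a translation-invariant probability measure. -/
theorem no_measurable_alternating_cocycle
    (μX : Measure GWX) [IsProbabilityMeasure μX]
    (hHaar : ∀ y : GWX, μX.map (· + y) = μX) :
    ¬ ∃ r : GWX → ℂ, Measurable r ∧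
        (∀ᵐ x ∂μX, ‖r x‖ = 1) ∧
        (∀ k : ℕ, ∀ᵐ x ∂μX, r (x + gwDelta k) = (-1 : ℂ) ^ (k + 1) * r x) := by
  rintro ⟨r, hrm, hr1, hrc⟩
  have hri : Integrable r μX := .of_bound hrm.aestronglyMeasurable 1 (hr1.mono fun _ h => h.le)
  have hodd (n : ℕ) : ∃ T, MeasurePreserving T μX μX ∧ (∀ x, ∀ i ≤ n, T x i = x i) ∧
      r ∘ T =ᵐ[μX] -r := by
    refine ⟨(· + gwDelta (2 * n + 2)), ⟨measurable_add_const _, hHaar _⟩,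
      fun x i hi => by simp [gwDelta, show i ≠ 2 * n + 2 by omega], ?_⟩
    have hsign : (-1 : ℂ) ^ (2 * n + 2 + 1) = -1 := Odd.neg_one_pow ⟨n + 1, by ring⟩
    filter_upwards [hrc (2 * n + 2)] with x hx
    simp [hx, hsign]
  have hφ (φ : ℂ →L[ℝ] ℝ) : φ ∘ r =ᵐ[μX] 0 := by
    refine ae_eq_zero_of_comp_eq_neg (φ.integrable_comp hri)
      (φ.continuous.measurable.comp hrm).stronglyMeasurable fun n => ?_
    obtain ⟨T, hT, hfix, hrT⟩ := hodd n
    exact ⟨T, hT, hfix, (hrT.fun_comp φ).trans (.of_forall fun x => map_neg φ (r x))⟩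
  obtain ⟨x, hx1, hxre, hxim⟩ := (hr1.and ((hφ Complex.reCLM).and (hφ Complex.imCLM))).exists
  have : r x = 0 := Complex.ext hxre hxim
  simp [this] at hx1
end
end

section
/- The functions c_k : X → ℂ defined by c_k ≡ 1 for k even, c_{4ℓ+1}(x) = (−1)^{x_{4ℓ+3}} and c_{4ℓ+3}(x) = (−1)^{x_{4ℓ+1}} for ℓ ≥ 0, satisfy for all k, l ≥ 1 and all x ∈ X: (i) conj(c_k(x)) = c_k(x+δ_k); (ii) c_k(x)·c_l(x+δ_k) = c_l(x)·c_k(x+δ_l); and (iii) conj(c_k(1−x)) = (−1)^k · c_k(x). -/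
/-!
Common setup: `GWX` is the compact abelian group `X = ∏_{k ≥ 1} {0,1}` of 0-1 sequences
(with componentwise addition mod 2 and the product σ-algebra, which is generated by the
sets `X_k = {x : x_k = 1}`).  The coordinate `i : ℕ` of `x : GWX` represents the paper's
coordinate `x_{i+1}`, so the Lean index `k : ℕ` corresponds to the paper's index `k + 1`
throughout; in particular the paper's sign `(-1)^k` becomes `(-1)^(k+1)` here.
-/

open MeasureTheory Complex Filter
open scoped ENNReal

noncomputable section

/-- The functions `c_k` of Theorem 3.11: in the paper's (1-based) indexing, `c_k ≡ 1` for
`k` even, `c_{4ℓ+1}(x) = (-1)^{x_{4ℓ+3}}`, `c_{4ℓ+3}(x) = (-1)^{x_{4ℓ+1}}`.  In the Lean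
(0-based) indexing used here (`Lean k` = paper's `k+1`): `gwC k ≡ 1` for `k` odd,
`gwC k x = (-1)^{x (k+2)}` for `k ≡ 0 [MOD 4]`, and `gwC k x = (-1)^{x (k-2)}` for
`k ≡ 2 [MOD 4]`. -/
def gwC (k : ℕ) (x : GWX) : ℂ :=
  if k % 2 = 1 then 1
  else if k % 4 = 0 then (-1 : ℂ) ^ (x (k + 2)).val
  else (-1 : ℂ) ^ (x (k - 2)).val

def gwPartner (k : ℕ) : ℕ := if k % 4 = 0 then k + 2 else k - 2

lemma gwC_even {k : ℕ} (hk : k % 2 = 0) (x : GWX) :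
    gwC k x = (-1 : ℂ) ^ (x (gwPartner k)).val := by
  unfold gwC gwPartner
  rcases eq_or_ne (k % 4) 0 with h | h <;> simp [hk, h] <;> omega

lemma zmod2_pow_add_one (a : ZMod 2) :
    (-1 : ℂ) ^ ((a + 1).val) = -(-1 : ℂ) ^ a.val := by
  have h : a = 0 ∨ a = 1 := by revert a; decide
  rcases h with h | h <;> subst h
  · norm_num [ZMod.val_one]
  · have h2 : (1 + 1 : ZMod 2) = 0 := by decide
    rw [h2]
    norm_num [ZMod.val_one]

lemma conj_neg_one_pow (n : ℕ) :
    (starRingEnd ℂ) ((-1 : ℂ) ^ n) = (-1 : ℂ) ^ n := by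
  simp [map_pow]

lemma gwC_add_delta (k j : ℕ) (x : GWX) :
    gwC k (x + gwDelta j) =
      if k % 2 = 0 ∧ gwPartner k = j then -gwC k x else gwC k x := by
  rcases Nat.mod_two_eq_zero_or_one k with hk | hk
  · rw [gwC_even hk, gwC_even hk]
    by_cases hj : gwPartner k = j
    · simp only [hk, hj, Pi.add_apply, gwDelta, if_pos rfl, and_self, if_true]
      exact zmod2_pow_add_one _
    · simp [Pi.add_apply, gwDelta, hj, hk]
  · simp [gwC, hk]

lemma partner_symm {k l : ℕ} (hl : l % 2 = 0) (h : gwPartner l = k) :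
    k % 2 = 0 ∧ gwPartner k = l := by
  unfold gwPartner at *
  rcases eq_or_ne (l % 4) 0 with h4 | h4
  · rw [if_pos h4] at h
    have hk4 : k % 4 ≠ 0 := by omega
    rw [if_neg hk4]
    omega
  · rw [if_neg h4] at h
    have hk4 : k % 4 = 0 := by omega
    rw [if_pos hk4]
    omega

/-- the functions `c_k` of Theorem 3.11 satisfy, for all `k, l` and all `x`:
(i) `conj(c_k(x)) = c_k(x + δ_k)`; (ii) `c_k(x) c_l(x+δ_k) = c_l(x) c_k(x+δ_l)`;
(iii) `conj(c_k(1-x)) = (-1)^k c_k(x)` (here `(-1)^(k+1)`, for the paper's index `k+1`). -/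
theorem gwC_relations :
    ∀ (k l : ℕ) (x : GWX),
      (starRingEnd ℂ) (gwC k x) = gwC k (x + gwDelta k) ∧
      gwC k x * gwC l (x + gwDelta k) = gwC l x * gwC k (x + gwDelta l) ∧
      (starRingEnd ℂ) (gwC k (gwFlip x)) = (-1 : ℂ) ^ (k + 1) * gwC k x := by
  intro k l x
  refine ⟨?_, ?_, ?_⟩
  · rw [gwC_add_delta]
    rcases Nat.mod_two_eq_zero_or_one k with hk | hk
    · rw [gwC_even hk, conj_neg_one_pow]
      have : gwPartner k ≠ k := by unfold gwPartner; split <;> omega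
      simp [this]
    · simp [gwC, hk]
  · rw [gwC_add_delta, gwC_add_delta]
    by_cases h1 : l % 2 = 0 ∧ gwPartner l = k
    · obtain ⟨hk2, hpk⟩ := partner_symm h1.1 h1.2
      simp [h1, hk2, hpk]; ring
    · have h2 : ¬ (k % 2 = 0 ∧ gwPartner k = l) := by
        rintro ⟨hk2, hpk⟩
        exact h1 (partner_symm hk2 hpk)
      simp [h1, h2]; ring
  · rcases Nat.mod_two_eq_zero_or_one k with hk | hk
    · rw [gwC_even hk, gwC_even hk]
      have hsign : (-1 : ℂ) ^ (k + 1) = -1 := by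
        rw [Odd.neg_one_pow]; exact ⟨k / 2, by omega⟩
      rw [hsign, conj_neg_one_pow]
      have : (gwFlip x) (gwPartner k) = x (gwPartner k) + 1 := by
        simp [gwFlip, sub_eq_add_neg, CharTwo.neg_eq, add_comm]
      rw [this, zmod2_pow_add_one]; ring
    · have hsign : (-1 : ℂ) ^ (k + 1) = 1 := by
        rw [Even.neg_one_pow]; exact ⟨(k+1) / 2, by omega⟩
      simp [gwC, hk, hsign]
end
end
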